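/- (Schuchman's condition, 1-D version) Let D be uniformly distributed on [-δ, δ] and let Q_δ denote the uniform quantizer with step 2δ, i.e., Q_δ(x) = 2δ · round(x/(2δ)). For any real random variable X independent of D, the quantization error e = Q_δ(X + D) − (X + D) is uniformly distributed on [-δ, δ] and is independent of X. -/

import Mathlib

open MeasureTheory ProbabilityTheory

/-- The uniform probability measure on `[-δ, δ]`. -/
noncomputable def unifSym (δ : ℝ) : Measure ℝ :=
  (ENNReal.ofReal (2 * δ))⁻¹ • (volume.restrict (Set.Icc (-δ) δ))

/-- The uniform quantizer with step `2δ`. -/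
noncomputable def unifQuant (δ : ℝ) (x : ℝ) : ℝ := 2 * δ * (round (x / (2 * δ)) : ℤ)

/-!
Write `e = φ(X + D)` with `φ(y) = Q_δ(y) - y`, a `2δ`-periodic function. For a fixed value `x`
of `X`, the law of `φ(x + D)` is the image of Lebesgue measure on the window `[x - δ, x + δ]`
under `φ`; by periodicity this does not depend on the window, and on `(-δ, δ)` we have
`φ(d) = -d`, so it is the uniform law on `[-δ, δ]` for every `x`. Since `D` is independent of `X`,
the map `(x, d) ↦ (x, φ(x + d))` then sends the joint law `μ_X ⊗ U` to itself, which gives both the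
law of `e` and its independence from `X`.
-/

open Set Function MeasureTheory ProbabilityTheory

theorem measurable_round {R : Type*} [Field R] [LinearOrder R] [IsStrictOrderedRing R]
    [FloorRing R] [TopologicalSpace R] [OrderTopology R] [MeasurableSpace R]
    [OpensMeasurableSpace R] [MeasurableAdd R] : Measurable (round : R → ℤ) := by
  rw [show (round : R → ℤ) = fun x => ⌊x + 1 / 2⌋ from funext round_eq]
  exact Int.measurable_floor.comp (measurable_id.add_const _)

theorem map_const_add_volume_restrict_Ioc (x a b : ℝ) :
    (volume.restrict (Ioc a b)).map (x + ·) = volume.restrict (Ioc (x + a) (x + b)) := by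
  conv_rhs => rw [← map_add_left_eq_self volume x,
    (measurableEmbedding_addLeft x).restrict_map, preimage_const_add_Ioc]
  simp only [add_sub_cancel_left]

namespace Function.Periodic

variable {α : Type*} [MeasurableSpace α] {f : ℝ → α} {T : ℝ} [Fact (0 < T)]

theorem map_volume_restrict_Ioc (hf : Periodic f T) (hfm : Measurable f) (a : ℝ) :
    (volume.restrict (Ioc a (a + T))).map f = (volume : Measure (AddCircle T)).map hf.lift := by
  have hlift : Measurable hf.lift := QuotientAddGroup.measurable_from_quotient.2 hfm
  have hmk := AddCircle.measurePreserving_mk T a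
  rw [← hmk.map_eq, Measure.map_map hlift hmk.measurable]
  rfl

/-- Both sides are the image of the Haar measure of `AddCircle T` under the lift of `f`, since
every period window maps onto the circle measure-preservingly. -/
theorem map_const_add_volume_restrict_Ioc (hf : Periodic f T) (hfm : Measurable f) (x a : ℝ) :
    (volume.restrict (Ioc a (a + T))).map (fun d => f (x + d)) =
      (volume.restrict (Ioc a (a + T))).map f := by
  rw [show (fun d => f (x + d)) = f ∘ (x + ·) from rfl,
    ← Measure.map_map hfm (measurable_const_add x), _root_.map_const_add_volume_restrict_Ioc,
    ← add_assoc, hf.map_volume_restrict_Ioc hfm, hf.map_volume_restrict_Ioc hfm]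

end Function.Periodic

theorem ProbabilityTheory.IndepFun.map_prodMk_comp_eq_prod {Ω α β γ : Type*}
    [MeasurableSpace Ω] [MeasurableSpace α] [MeasurableSpace β] [MeasurableSpace γ]
    {P : Measure Ω} [IsProbabilityMeasure P] {X : Ω → α} {D : Ω → β} {g : α → β → γ}
    {ν : Measure γ} (hind : IndepFun X D P) (hX : Measurable X) (hD : Measurable D)
    (hg : Measurable (uncurry g)) (hν : ∀ x, (P.map D).map (g x) = ν) :
    P.map (fun ω => (X ω, g (X ω) (D ω))) = (P.map X).prod ν := by
  have hXD : P.map (fun ω => (X ω, D ω)) = (P.map X).prod (P.map D) :=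
    (indepFun_iff_map_prod_eq_prod_map_map hX.aemeasurable hD.aemeasurable).1 hind
  have hskew := (MeasurePreserving.id (P.map X)).skew_product hg (ae_of_all _ hν)
  rw [← hskew.map_eq, ← hXD, Measure.map_map hskew.measurable (hX.prodMk hD)]
  rfl

theorem ProbabilityTheory.IndepFun.map_comp_eq_and_indepFun {Ω α β γ : Type*}
    [MeasurableSpace Ω] [MeasurableSpace α] [MeasurableSpace β] [MeasurableSpace γ]
    {P : Measure Ω} [IsProbabilityMeasure P] {X : Ω → α} {D : Ω → β} {g : α → β → γ}
    {ν : Measure γ} (hind : IndepFun X D P) (hX : Measurable X) (hD : Measurable D)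
    (hg : Measurable (uncurry g)) (hν : ∀ x, (P.map D).map (g x) = ν) :
    P.map (fun ω => g (X ω) (D ω)) = ν ∧ IndepFun (fun ω => g (X ω) (D ω)) X P := by
  have hjoint := hind.map_prodMk_comp_eq_prod hX hD hg hν
  have hgXD : Measurable fun ω => g (X ω) (D ω) := hg.comp (hX.prodMk hD)
  have := Measure.isProbabilityMeasure_map (μ := P) hX.aemeasurable
  have := Measure.isProbabilityMeasure_map (μ := P) hD.aemeasurable
  obtain ⟨ω⟩ := nonempty_of_isProbabilityMeasure P
  have : IsProbabilityMeasure ν := by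
    rw [← hν (X ω)]
    exact Measure.isProbabilityMeasure_map hg.of_uncurry_left.aemeasurable
  have hlaw : P.map (fun ω => g (X ω) (D ω)) = ν := by
    rw [show (fun ω => g (X ω) (D ω)) = Prod.snd ∘ fun ω => (X ω, g (X ω) (D ω)) from rfl,
      ← Measure.map_map measurable_snd (hX.prodMk hgXD)]
    simp [hjoint]
  refine ⟨hlaw, IndepFun.symm ?_⟩
  rw [indepFun_iff_map_prod_eq_prod_map_map hX.aemeasurable hgXD.aemeasurable, hlaw, hjoint]

noncomputable def quantError (δ y : ℝ) : ℝ := unifQuant δ y - y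

theorem measurable_quantError (δ : ℝ) : Measurable (quantError δ) :=
  (measurable_const.mul (measurable_from_top.comp
    (measurable_round.comp (measurable_id.div_const _)))).sub measurable_id

theorem periodic_quantError {δ : ℝ} (hδ : δ ≠ 0) : Periodic (quantError δ) (2 * δ) := by
  intro y
  have : (y + 2 * δ) / (2 * δ) = y / (2 * δ) + 1 := by field_simp
  simp only [quantError, unifQuant, this, round_add_one]
  push_cast
  ring

theorem quantError_eq_neg {δ d : ℝ} (hd : d ∈ Ioo (-δ) δ) : quantError δ d = -d := by
  have hδ : 0 < 2 * δ := by linarith [hd.1, hd.2]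
  have hround : round (d / (2 * δ)) = 0 := by
    rw [round_eq_zero_iff, mem_Ico, le_div_iff₀ hδ, div_lt_iff₀ hδ]
    constructor <;> linarith [hd.1, hd.2]
  simp [quantError, unifQuant, hround]

theorem map_quantError_volume_restrict_Icc (δ : ℝ) :
    (volume.restrict (Icc (-δ) δ)).map (quantError δ) = volume.restrict (Icc (-δ) δ) := by
  have hIoo : volume.restrict (Ioo (-δ) δ) = volume.restrict (Icc (-δ) δ) :=
    Measure.restrict_congr_set Ioo_ae_eq_Icc
  have hneg : (volume.restrict (Icc (-δ) δ)).map Neg.neg = volume.restrict (Icc (-δ) δ) := by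
    conv_rhs => rw [← Measure.map_neg_eq_self volume, measurableEmbedding_neg.restrict_map,
      neg_preimage, neg_Icc, neg_neg]
  rw [← hIoo, Measure.map_congr ((ae_restrict_iff' measurableSet_Ioo).2
    (ae_of_all _ fun d => quantError_eq_neg)), hIoo, hneg]

theorem map_quantError_const_add_unifSym {δ : ℝ} (hδ : 0 < δ) (x : ℝ) :
    (unifSym δ).map (fun d => quantError δ (x + d)) = unifSym δ := by
  have : Fact (0 < 2 * δ) := ⟨by positivity⟩
  have hwindow : volume.restrict (Icc (-δ) δ) = volume.restrict (Ioc (-δ) (-δ + 2 * δ)) := by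
    rw [show -δ + 2 * δ = δ by ring]
    exact Measure.restrict_congr_set Ioc_ae_eq_Icc |>.symm
  rw [unifSym, Measure.map_smul, hwindow,
    (periodic_quantError hδ.ne').map_const_add_volume_restrict_Ioc (measurable_quantError δ),
    ← hwindow, map_quantError_volume_restrict_Icc]

/-- Schuchman's condition (1-D version): with subtractive dither `D` uniform on `[-δ, δ]`
independent of the input `X`, the quantization error `e = Q_δ(X + D) − (X + D)` is
uniform on `[-δ, δ]` and independent of `X`. -/
theorem stmt7 {Ω : Type*} [MeasureSpace Ω] [IsProbabilityMeasure (ℙ : Measure Ω)]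
    (δ : ℝ) (hδ : 0 < δ) (D X : Ω → ℝ) (hmD : Measurable D) (hmX : Measurable X)
    (hD : Measure.map D ℙ = unifSym δ)
    (hind : ProbabilityTheory.IndepFun X D ℙ) :
    Measure.map (fun ω => unifQuant δ (X ω + D ω) - (X ω + D ω)) ℙ = unifSym δ ∧
    ProbabilityTheory.IndepFun (fun ω => unifQuant δ (X ω + D ω) - (X ω + D ω)) X ℙ :=
  hind.map_comp_eq_and_indepFun (g := fun x d => quantError δ (x + d)) hmX hmD
    ((measurable_quantError δ).comp (measurable_fst.add measurable_snd))
    (fun x => hD ▸ map_quantError_const_add_unifSym hδ x)
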